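/- arXiv:1712.08276 — 2 statements merged into one kernel-verified Lean document; each statement's English description precedes it below -/
import Mathlib

section
/- In a skew monoidal category with a natural isomorphism s : (XA)B → (XB)A satisfying braiding axiom (S3b) (i.e., axiom (S3a) for s⁻¹: the composite ((XA)B)C →^{s} ((XA)C)B →^{s1} ((XC)A)B →^{a} (XC)(AB) equals ((XA)B)C →^{a1} (X(AB))C →^{s} (XC)(AB)), the triangle WA →^{r⊗1} (WI)A →^{s} (WA)I equals r : WA → (WA)I. -/
open CategoryTheory

universe v u

/-- A (left) skew monoidal category: tensor, unit, and structure maps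
`a : (XY)Z ⟶ X(YZ)`, `ℓ : IX ⟶ X`, `r : X ⟶ XI` satisfying the five
coherence conditions of Szlachányi (none required to be invertible). -/
structure SkewMonoidalStruct (C : Type u) [Category.{v} C] where
  tensor : C → C → C
  tensorHom : ∀ {X X' Y Y' : C}, (X ⟶ X') → (Y ⟶ Y') → (tensor X Y ⟶ tensor X' Y')
  tensorHom_id : ∀ (X Y : C), tensorHom (𝟙 X) (𝟙 Y) = 𝟙 (tensor X Y)
  tensorHom_comp : ∀ {X X' X'' Y Y' Y'' : C} (f : X ⟶ X') (f' : X' ⟶ X'')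
      (g : Y ⟶ Y') (g' : Y' ⟶ Y''),
      tensorHom (f ≫ f') (g ≫ g') = tensorHom f g ≫ tensorHom f' g'
  unit : C
  assoc : ∀ X Y Z : C, tensor (tensor X Y) Z ⟶ tensor X (tensor Y Z)
  lunit : ∀ X : C, tensor unit X ⟶ X
  runit : ∀ X : C, X ⟶ tensor X unit
  assoc_natural : ∀ {X X' Y Y' Z Z' : C} (f : X ⟶ X') (g : Y ⟶ Y') (h : Z ⟶ Z'),
      tensorHom (tensorHom f g) h ≫ assoc X' Y' Z' =
        assoc X Y Z ≫ tensorHom f (tensorHom g h)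
  lunit_natural : ∀ {X X' : C} (f : X ⟶ X'),
      tensorHom (𝟙 unit) f ≫ lunit X' = lunit X ≫ f
  runit_natural : ∀ {X X' : C} (f : X ⟶ X'),
      runit X ≫ tensorHom f (𝟙 unit) = f ≫ runit X'
  pentagon : ∀ W X Y Z : C,
      tensorHom (assoc W X Y) (𝟙 Z) ≫ assoc W (tensor X Y) Z ≫
        tensorHom (𝟙 W) (assoc X Y Z) =
      assoc (tensor W X) Y Z ≫ assoc W X (tensor Y Z)
  lunit_assoc : ∀ X Y : C,
      assoc unit X Y ≫ lunit (tensor X Y) = tensorHom (lunit X) (𝟙 Y)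
  runit_assoc : ∀ X Y : C,
      runit (tensor X Y) ≫ assoc X Y unit = tensorHom (𝟙 X) (runit Y)
  middle_unit : ∀ X Y : C,
      tensorHom (runit X) (𝟙 Y) ≫ assoc X unit Y ≫ tensorHom (𝟙 X) (lunit Y) =
        𝟙 (tensor X Y)
  lunit_runit : runit unit ≫ lunit unit = 𝟙 unit

namespace SkewMonoidalStruct

variable {C : Type u} [Category.{v} C] (M : SkewMonoidalStruct C)

/-- Naturality (in all three variables) for a family `s : (XA)B ⟶ (XB)A`. -/
def SNatural (s : ∀ X A B : C, M.tensor (M.tensor X A) B ⟶ M.tensor (M.tensor X B) A) : Prop :=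
  ∀ {X X' A A' B B' : C} (f : X ⟶ X') (g : A ⟶ A') (h : B ⟶ B'),
    M.tensorHom (M.tensorHom f g) h ≫ s X' A' B' =
      s X A B ≫ M.tensorHom (M.tensorHom f h) g

/-- Axiom (S2), the Yang–Baxter-type hexagon. -/
def S2 (s : ∀ X A B : C, M.tensor (M.tensor X A) B ⟶ M.tensor (M.tensor X B) A) : Prop :=
  ∀ X A B Cc : C,
    s (M.tensor X A) B Cc ≫ M.tensorHom (s X A Cc) (𝟙 B) ≫ s (M.tensor X Cc) A B =
      M.tensorHom (s X A B) (𝟙 Cc) ≫ s (M.tensor X B) A Cc ≫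
        M.tensorHom (s X B Cc) (𝟙 A)

/-- Axiom (S3a): the composite `((XA)B)C →^{s1} ((XB)A)C →^{s} ((XB)C)A →^{a1} (X(BC))A`
equals `((XA)B)C →^{a} (XA)(BC) →^{s} (X(BC))A`. -/
def S3a (s : ∀ X A B : C, M.tensor (M.tensor X A) B ⟶ M.tensor (M.tensor X B) A) : Prop :=
  ∀ X A B Cc : C,
    M.tensorHom (s X A B) (𝟙 Cc) ≫ s (M.tensor X B) A Cc ≫
        M.tensorHom (M.assoc X B Cc) (𝟙 A) =
      M.assoc (M.tensor X A) B Cc ≫ s X A (M.tensor B Cc)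

/-- Axiom (S3b): the composite `((XA)B)C →^{s} ((XA)C)B →^{s1} ((XC)A)B →^{a} (XC)(AB)`
equals `((XA)B)C →^{a1} (X(AB))C →^{s} (XC)(AB)`. -/
def S3b (s : ∀ X A B : C, M.tensor (M.tensor X A) B ⟶ M.tensor (M.tensor X B) A) : Prop :=
  ∀ X A B Cc : C,
    s (M.tensor X A) B Cc ≫ M.tensorHom (s X A Cc) (𝟙 B) ≫
        M.assoc (M.tensor X Cc) A B =
      M.tensorHom (M.assoc X A B) (𝟙 Cc) ≫ s X (M.tensor A B) Cc

/-- Axiom (S*). -/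
def Sstar (s : ∀ X A B : C, M.tensor (M.tensor X A) B ⟶ M.tensor (M.tensor X B) A) : Prop :=
  ∀ X A B Cc : C,
    M.tensorHom (M.assoc X A B) (𝟙 Cc) ≫ M.assoc X (M.tensor A B) Cc ≫
        M.tensorHom (𝟙 X) (s A B Cc) =
      s (M.tensor X A) B Cc ≫ M.tensorHom (M.assoc X A Cc) (𝟙 B) ≫
        M.assoc X (M.tensor A Cc) B

end SkewMonoidalStruct

/-! For `f : X ⟶ YI` let `c f : XB → (YI)B → Y(IB) → YB` contract the unit against `ℓ`; the
middle-unit axiom says `c r = 1`, and the other unit axioms give `r ≫ c f = f` at `B = I`.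
Naturality of `s` and (S3b) carry `c r = 1` over to `φ = (r ⊗ 1) ≫ s`, in the form
`s ≫ c φ = s`. As `s` is invertible, `c φ = 1`, hence `φ = r ≫ c φ = r`. -/

namespace SkewMonoidalStruct

variable {C : Type u} [Category.{v} C] (M : SkewMonoidalStruct C)

lemma tensorHom_comp_id {X X' X'' : C} (f : X ⟶ X') (f' : X' ⟶ X'') (Y : C) :
    M.tensorHom (f ≫ f') (𝟙 Y) = M.tensorHom f (𝟙 Y) ≫ M.tensorHom f' (𝟙 Y) := by
  simpa using M.tensorHom_comp f f' (𝟙 Y) (𝟙 Y)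

lemma tensorHom_id_comp (X : C) {Y Y' Y'' : C} (g : Y ⟶ Y') (g' : Y' ⟶ Y'') :
    M.tensorHom (𝟙 X) (g ≫ g') = M.tensorHom (𝟙 X) g ≫ M.tensorHom (𝟙 X) g' := by
  simpa using M.tensorHom_comp (𝟙 X) (𝟙 X) g g'

def unitContract {X Y : C} (f : X ⟶ M.tensor Y M.unit) (B : C) :
    M.tensor X B ⟶ M.tensor Y B :=
  M.tensorHom f (𝟙 B) ≫ M.assoc Y M.unit B ≫ M.tensorHom (𝟙 Y) (M.lunit B)

lemma unitContract_runit (X B : C) : M.unitContract (M.runit X) B = 𝟙 (M.tensor X B) :=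
  M.middle_unit X B

lemma unitContract_comp {X X' Y : C} (g : X ⟶ X') (f : X' ⟶ M.tensor Y M.unit) (B : C) :
    M.unitContract (g ≫ f) B = M.tensorHom g (𝟙 B) ≫ M.unitContract f B := by
  simp only [unitContract, tensorHom_comp_id, Category.assoc]

lemma runit_comp_unitContract {X Y : C} (f : X ⟶ M.tensor Y M.unit) :
    M.runit X ≫ M.unitContract f M.unit = f := by
  rw [unitContract, ← Category.assoc, M.runit_natural, Category.assoc,
    ← Category.assoc (M.runit _), M.runit_assoc, ← tensorHom_id_comp, M.lunit_runit,
    M.tensorHom_id, Category.comp_id]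

variable {M}
variable {s : ∀ X A B : C, M.tensor (M.tensor X A) B ⟶ M.tensor (M.tensor X B) A}

lemma s_comp_unitContract_runit_s (hnat : M.SNatural s) (h3b : M.S3b s) (W A B : C) :
    s W B A ≫ M.unitContract (M.tensorHom (M.runit W) (𝟙 A) ≫ s W M.unit A) B = s W B A := by
  have hs_lunit : s W (M.tensor M.unit B) A ≫ M.tensorHom (𝟙 (M.tensor W A)) (M.lunit B) =
      M.tensorHom (M.tensorHom (𝟙 W) (M.lunit B)) (𝟙 A) ≫ s W B A := by
    simpa only [M.tensorHom_id] using (hnat (𝟙 W) (M.lunit B) (𝟙 A)).symm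
  calc s W B A ≫ M.unitContract (M.tensorHom (M.runit W) (𝟙 A) ≫ s W M.unit A) B
      = M.tensorHom (M.tensorHom (M.runit W) (𝟙 B)) (𝟙 A) ≫
          (s (M.tensor W M.unit) B A ≫ M.tensorHom (s W M.unit A) (𝟙 B) ≫
            M.assoc (M.tensor W A) M.unit B) ≫
          M.tensorHom (𝟙 (M.tensor W A)) (M.lunit B) := by
        rw [unitContract_comp, unitContract, ← Category.assoc (s W B A),
          ← hnat (M.runit W) (𝟙 B) (𝟙 A)]
        simp only [Category.assoc]
    _ = M.tensorHom (M.unitContract (M.runit W) B) (𝟙 A) ≫ s W B A := by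
        rw [h3b, Category.assoc, hs_lunit, unitContract, tensorHom_comp_id,
          tensorHom_comp_id]
        simp only [Category.assoc]
    _ = s W B A := by
        rw [unitContract_runit, M.tensorHom_id, Category.id_comp]

end SkewMonoidalStruct

open SkewMonoidalStruct in
/-- Proposition: consequence of (S3b).
In a skew monoidal category with a natural isomorphism `s : (XA)B ⟶ (XB)A`
satisfying (S3b), the triangle `WA →^{r⊗1} (WI)A →^{s} (WA)I` equals `r`. -/
theorem stmt4 {C : Type u} [Category.{v} C] (M : SkewMonoidalStruct C)
    (s : ∀ X A B : C, M.tensor (M.tensor X A) B ⟶ M.tensor (M.tensor X B) A)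
    (hiso : ∀ X A B : C, IsIso (s X A B))
    (hnat : M.SNatural s) (h3b : M.S3b s) :
    ∀ W A : C,
      M.tensorHom (M.runit W) (𝟙 A) ≫ s W M.unit A =
        M.runit (M.tensor W A) := by
  intro W A
  have hcontract :
      M.unitContract (M.tensorHom (M.runit W) (𝟙 A) ≫ s W M.unit A) M.unit = 𝟙 _ := by
    rw [← cancel_epi (s W M.unit A), Category.comp_id,
      s_comp_unitContract_runit_s hnat h3b]
  rw [← M.runit_comp_unitContract (M.tensorHom (M.runit W) (𝟙 A) ≫ s W M.unit A), hcontract,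
    Category.comp_id]
end

section
/- In a skew closed category satisfying axiom (S3') for a natural isomorphism s' : [B,[A,Y]] → [A,[B,Y]], the composite [B,C] →^{L} [[B,B],[B,C]] →^{[j,1]} [I,[B,C]] →^{s'} [B,[I,C]] →^{[1,i]} [B,C] is the identity. In particular, axiom (S4) of Bourke's definition of symmetric skew closed category is redundant. -/
/-! The maps `s' I B C ≫ [1, i C]` and `i [B, C]` are both solutions `ψ : [I, X] ⟶ X` of
`L I I X ≫ [1, ψ] = [i I, 1]`, and that equation has only one solution: precomposing it with
axiom (1) and using `j I ≫ i I = 1` recovers `ψ`. For `s' ≫ [1, i]` the equation follows from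
(S3') and axiom (4) after cancelling the monomorphism `s'`. Substituting `i [B, C]` for it
turns the composite of the theorem into the left side of axiom (1). -/

open CategoryTheory

universe v u

/-- A skew closed category in the sense of Street: an internal hom `[−,−]`,
a unit `I`, and structure maps `L : [B,C] ⟶ [[A,B],[A,C]]`, `i : [I,A] ⟶ A`,
`j : I ⟶ [A,A]` satisfying Street's five coherence axioms. -/
structure SkewClosedStruct (C : Type u) [Category.{v} C] where
  ihom : C → C → C
  ihomMap : ∀ {A' A B B' : C}, (A' ⟶ A) → (B ⟶ B') → (ihom A B ⟶ ihom A' B')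
  ihomMap_id : ∀ A B : C, ihomMap (𝟙 A) (𝟙 B) = 𝟙 (ihom A B)
  ihomMap_comp : ∀ {A'' A' A B B' B'' : C}
      (f : A' ⟶ A) (f' : A'' ⟶ A') (g : B ⟶ B') (g' : B' ⟶ B''),
      ihomMap (f' ≫ f) (g ≫ g') = ihomMap f g ≫ ihomMap f' g'
  unit : C
  L : ∀ A B Cc : C, ihom B Cc ⟶ ihom (ihom A B) (ihom A Cc)
  i : ∀ A : C, ihom unit A ⟶ A
  j : ∀ A : C, unit ⟶ ihom A A
  L_natural : ∀ {A B' B Cc Cc' : C} (f : B' ⟶ B) (g : Cc ⟶ Cc'),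
      ihomMap f g ≫ L A B' Cc' =
        L A B Cc ≫ ihomMap (ihomMap (𝟙 A) f) (ihomMap (𝟙 A) g)
  L_dinatural : ∀ {A A' B Cc : C} (f : A' ⟶ A),
      L A B Cc ≫ ihomMap (𝟙 (ihom A B)) (ihomMap f (𝟙 Cc)) =
        L A' B Cc ≫ ihomMap (ihomMap f (𝟙 B)) (𝟙 (ihom A' Cc))
  i_natural : ∀ {A A' : C} (f : A ⟶ A'),
      ihomMap (𝟙 unit) f ≫ i A' = i A ≫ f
  j_dinatural : ∀ {A A' : C} (f : A ⟶ A'),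
      j A ≫ ihomMap (𝟙 A) f = j A' ≫ ihomMap f (𝟙 A')
  ax1 : ∀ A B : C,
      L A A B ≫ ihomMap (j A) (𝟙 (ihom A B)) ≫ i (ihom A B) = 𝟙 (ihom A B)
  ax2 : ∀ A B : C, j B ≫ L A B B = j (ihom A B)
  ax3 : ∀ A B Cc D : C,
      L A Cc D ≫ L (ihom A B) (ihom A Cc) (ihom A D) ≫
          ihomMap (L A B Cc) (𝟙 (ihom (ihom A B) (ihom A D))) =
        L B Cc D ≫ ihomMap (𝟙 (ihom B Cc)) (L A B D)
  ax4 : ∀ B Cc : C,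
      L unit B Cc ≫ ihomMap (𝟙 (ihom unit B)) (i Cc) = ihomMap (i B) (𝟙 Cc)
  ax5 : j unit ≫ i unit = 𝟙 unit

namespace SkewClosedStruct

variable {C : Type u} [Category.{v} C] (M : SkewClosedStruct C)

/-- Naturality (in all three variables) for a family
`s' : [B,[A,Y]] ⟶ [A,[B,Y]]`. -/
def S'Natural (s' : ∀ B A Y : C, M.ihom B (M.ihom A Y) ⟶ M.ihom A (M.ihom B Y)) : Prop :=
  ∀ {B' B A' A Y Y' : C} (f : B' ⟶ B) (g : A' ⟶ A) (h : Y ⟶ Y'),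
    M.ihomMap f (M.ihomMap g h) ≫ s' B' A' Y' =
      s' B A Y ≫ M.ihomMap g (M.ihomMap f h)

/-- Axiom (S3') of a braiding on a skew closed category: the pentagon
`[B,[A,Y]] →^{L} [[C,B],[C,[A,Y]]] →^{[1,s']} [[C,B],[A,[C,Y]]] →^{s'} [A,[[C,B],[C,Y]]]`
equals `[B,[A,Y]] →^{s'} [A,[B,Y]] →^{[1,L]} [A,[[C,B],[C,Y]]]`. -/
def S3' (s' : ∀ B A Y : C, M.ihom B (M.ihom A Y) ⟶ M.ihom A (M.ihom B Y)) : Prop :=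
  ∀ B A Y Cc : C,
    M.L Cc B (M.ihom A Y) ≫
        M.ihomMap (𝟙 (M.ihom Cc B)) (s' Cc A Y) ≫
        s' (M.ihom Cc B) A (M.ihom Cc Y) =
      s' B A Y ≫ M.ihomMap (𝟙 A) (M.L Cc B Y)

end SkewClosedStruct

namespace SkewClosedStruct

variable {C : Type u} [Category.{v} C] (M : SkewClosedStruct C)

theorem ihomMap_id_comp {A X Y Z : C} (g : X ⟶ Y) (h : Y ⟶ Z) :
    M.ihomMap (𝟙 A) (g ≫ h) = M.ihomMap (𝟙 A) g ≫ M.ihomMap (𝟙 A) h := by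
  simpa using M.ihomMap_comp (𝟙 A) (𝟙 A) g h

theorem ihomMap_comp_id {A'' A' A B : C} (f : A' ⟶ A) (f' : A'' ⟶ A') :
    M.ihomMap (f' ≫ f) (𝟙 B) = M.ihomMap f (𝟙 B) ≫ M.ihomMap f' (𝟙 B) := by
  simpa using M.ihomMap_comp f f' (𝟙 B) (𝟙 B)

theorem ihomMap_id_comm {A' A B B' : C} (f : A' ⟶ A) (g : B ⟶ B') :
    M.ihomMap f (𝟙 B) ≫ M.ihomMap (𝟙 A') g = M.ihomMap (𝟙 A) g ≫ M.ihomMap f (𝟙 B') := by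
  rw [← M.ihomMap_comp, ← M.ihomMap_comp]
  simp

theorem eq_i_of_L_comp_ihomMap_eq {X : C} (ψ : M.ihom M.unit X ⟶ X)
    (hψ : M.L M.unit M.unit X ≫ M.ihomMap (𝟙 _) ψ = M.ihomMap (M.i M.unit) (𝟙 X)) :
    ψ = M.i X :=
  calc ψ = (M.L M.unit M.unit X ≫ M.ihomMap (M.j M.unit) (𝟙 _) ≫ M.i _) ≫ ψ := by
        rw [M.ax1, Category.id_comp]
    _ = M.L M.unit M.unit X ≫ M.ihomMap (M.j M.unit) (𝟙 _) ≫ M.ihomMap (𝟙 M.unit) ψ ≫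
          M.i X := by
        simp only [Category.assoc, M.i_natural]
    _ = (M.L M.unit M.unit X ≫ M.ihomMap (𝟙 _) ψ) ≫ M.ihomMap (M.j M.unit) (𝟙 X) ≫ M.i X := by
        rw [← Category.assoc (M.ihomMap (M.j M.unit) _), M.ihomMap_id_comm]
        simp only [Category.assoc]
    _ = M.i X := by
        rw [hψ, ← Category.assoc, ← M.ihomMap_comp_id, M.ax5, M.ihomMap_id, Category.id_comp]

theorem L_comp_ihomMap_s'_comp_i
    (s' : ∀ B A Y : C, M.ihom B (M.ihom A Y) ⟶ M.ihom A (M.ihom B Y))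
    [∀ B A Y : C, Mono (s' B A Y)] (hnat : M.S'Natural s') (h3 : M.S3' s') (B Y : C) :
    M.L M.unit M.unit (M.ihom B Y) ≫
        M.ihomMap (𝟙 _) (s' M.unit B Y ≫ M.ihomMap (𝟙 B) (M.i Y)) =
      M.ihomMap (M.i M.unit) (𝟙 (M.ihom B Y)) := by
  rw [← cancel_mono (s' (M.ihom M.unit M.unit) B Y)]
  calc _ = (M.L M.unit M.unit (M.ihom B Y) ≫ M.ihomMap (𝟙 _) (s' M.unit B Y) ≫
          s' (M.ihom M.unit M.unit) B (M.ihom M.unit Y)) ≫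
          M.ihomMap (𝟙 B) (M.ihomMap (𝟙 _) (M.i Y)) := by
        simp only [M.ihomMap_id_comp, Category.assoc]
        rw [hnat]
    _ = s' M.unit B Y ≫ M.ihomMap (𝟙 B) (M.L M.unit M.unit Y ≫ M.ihomMap (𝟙 _) (M.i Y)) := by
        rw [h3, M.ihomMap_id_comp, Category.assoc]
    _ = M.ihomMap (M.i M.unit) (M.ihomMap (𝟙 B) (𝟙 Y)) ≫ s' (M.ihom M.unit M.unit) B Y := by
        rw [M.ax4, hnat]
    _ = _ := by
        rw [M.ihomMap_id]

theorem s'_comp_ihomMap_i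
    (s' : ∀ B A Y : C, M.ihom B (M.ihom A Y) ⟶ M.ihom A (M.ihom B Y))
    [∀ B A Y : C, Mono (s' B A Y)] (hnat : M.S'Natural s') (h3 : M.S3' s') (B Y : C) :
    s' M.unit B Y ≫ M.ihomMap (𝟙 B) (M.i Y) = M.i (M.ihom B Y) :=
  M.eq_i_of_L_comp_ihomMap_eq _ (M.L_comp_ihomMap_s'_comp_i s' hnat h3 B Y)

end SkewClosedStruct

/-- Corollary: redundancy of axiom (S4) of Bourke's symmetric skew
closed categories. In a skew closed category with a natural isomorphism
`s' : [B,[A,Y]] ⟶ [A,[B,Y]]` satisfying (S3'), the composite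
`[B,C] →^{L} [[B,B],[B,C]] →^{[j,1]} [I,[B,C]] →^{s'} [B,[I,C]] →^{[1,i]} [B,C]`
is the identity. -/
theorem stmt9 {C : Type u} [Category.{v} C] (M : SkewClosedStruct C)
    (s' : ∀ B A Y : C, M.ihom B (M.ihom A Y) ⟶ M.ihom A (M.ihom B Y))
    (hiso : ∀ B A Y : C, IsIso (s' B A Y))
    (hnat : M.S'Natural s') (h3 : M.S3' s') :
    ∀ B Cc : C,
      M.L B B Cc ≫ M.ihomMap (M.j B) (𝟙 (M.ihom B Cc)) ≫
          s' M.unit B Cc ≫ M.ihomMap (𝟙 B) (M.i Cc) =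
        𝟙 (M.ihom B Cc) := by
  intro B Cc
  have : ∀ B A Y : C, Mono (s' B A Y) := fun B A Y => (hiso B A Y).mono_of_iso
  rw [M.s'_comp_ihomMap_i s' hnat h3, M.ax1]
end
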